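/- Let n ≥ 2, let U ⊆ ℝⁿ be open, let f : U → ℝ be a positive C³ function and let u : U → ℝ be a C³ function satisfying the torsion-type equation Δu = −1 + (Δf/f)·u on U. Define the vector field X : U → ℝⁿ by X = f·∇(|∇u|²) + (2/n)·f·∇u − (Hess f)·∇(u²) − (2/n)·u·∇f − 2u·(Hess u)·∇f + (2u²/f)·(Hess f)·∇f. Then at every point of U one has div X = 2f·‖Hess u − (Δu/n)·Iₙ − (u/f)·(Hess f − (Δf/n)·Iₙ)‖_F² + 2·(∇u − (u/f)·∇f)ᵀ · Q · (∇u − (u/f)·∇f), where Q = (Δf)·Iₙ − Hess f. -/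

import Mathlib

open scoped BigOperators

/-- Partial derivative `∂ᵢ v` of a scalar function on `ℝⁿ = Fin n → ℝ`. -/
noncomputable def pd {n : ℕ} (i : Fin n) (v : (Fin n → ℝ) → ℝ) (x : Fin n → ℝ) : ℝ :=
  fderiv ℝ v x (Pi.single i 1)

/-- Gradient `∇v`. -/
noncomputable def grad {n : ℕ} (v : (Fin n → ℝ) → ℝ) (x : Fin n → ℝ) : Fin n → ℝ :=
  fun i => pd i v x

/-- Hessian matrix `(∂ᵢ∂ⱼ v)ᵢⱼ`. -/
noncomputable def hess {n : ℕ} (v : (Fin n → ℝ) → ℝ) (x : Fin n → ℝ) :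
    Matrix (Fin n) (Fin n) ℝ :=
  fun i j => pd i (fun y => pd j v y) x

/-- Laplacian `Δv = tr (Hess v)`. -/
noncomputable def lap {n : ℕ} (v : (Fin n → ℝ) → ℝ) (x : Fin n → ℝ) : ℝ :=
  ∑ i, hess v x i i

/-- Divergence of a vector field. -/
noncomputable def divg {n : ℕ} (X : (Fin n → ℝ) → (Fin n → ℝ)) (x : Fin n → ℝ) : ℝ :=
  ∑ i, pd i (fun y => X y i) x

/-- Euclidean inner product. -/
def dotp {n : ℕ} (a b : Fin n → ℝ) : ℝ := ∑ i, a i * b i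

/-- Frobenius inner product of matrices. -/
def frobInner {n : ℕ} (A B : Matrix (Fin n) (Fin n) ℝ) : ℝ := ∑ i, ∑ j, A i j * B i j

/-- Squared Frobenius norm of a matrix. -/
def frobSq {n : ℕ} (A : Matrix (Fin n) (Fin n) ℝ) : ℝ := ∑ i, ∑ j, (A i j) ^ 2
/-
Write `w = u / f`, `V = ∇u - w ∇f = f ∇w` and `M = Hess u - w Hess f`. Expanding the definition
gives `X = 2f (M + Iₙ/n) V`, and the equation says exactly `tr M = -1`, so `T = M + Iₙ/n` is the
traceless part of `M`. The product rule gives `div X = 2⟨∇f, TV⟩ + 2f (⟨div T, V⟩ + ⟨T, ∇V⟩)`.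
Since `∂ᵢVⱼ = Mᵢⱼ - Vᵢ ∂ⱼf / f` and `T` is symmetric, `⟨T, ∇V⟩ = ‖T‖² - ⟨∇f, TV⟩ / f`
(using `⟨T, M⟩ = ‖T‖²` for traceless `T`). Commuting third derivatives and differentiating the
equation gives `div M = Q ∇w = Q V / f`, which produces the term `2 ⟨V, QV⟩`.
-/

open Filter Topology Matrix

section PartialDerivatives

variable {n : ℕ} {x : Fin n → ℝ} {v w : (Fin n → ℝ) → ℝ} {i : Fin n}

lemma pd_congr (h : v =ᶠ[𝓝 x] w) : pd i v x = pd i w x := by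
  rw [pd, pd, h.fderiv_eq]

lemma pd_add_const (c : ℝ) : pd i (fun y => v y + c) x = pd i v x := by
  simp [pd, fderiv_add_const]

lemma pd_const_add (c : ℝ) : pd i (fun y => c + v y) x = pd i v x := by
  simp [pd, fderiv_const_add]

lemma pd_sub (hv : DifferentiableAt ℝ v x) (hw : DifferentiableAt ℝ w x) :
    pd i (fun y => v y - w y) x = pd i v x - pd i w x := by
  simp [pd, fderiv_fun_sub hv hw]

lemma pd_mul (hv : DifferentiableAt ℝ v x) (hw : DifferentiableAt ℝ w x) :
    pd i (fun y => v y * w y) x = pd i v x * w x + v x * pd i w x := by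
  simp [pd, fderiv_fun_mul hv hw]; ring

lemma pd_const_mul (hv : DifferentiableAt ℝ v x) (c : ℝ) :
    pd i (fun y => c * v y) x = c * pd i v x := by
  simp [pd, fderiv_const_mul hv]

lemma pd_inv (hv : DifferentiableAt ℝ v x) (hx : v x ≠ 0) :
    pd i (fun y => (v y)⁻¹) x = -pd i v x / v x ^ 2 := by
  have h : HasFDerivAt (fun y => (v y)⁻¹) _ x := (hasFDerivAt_inv hx).comp x hv.hasFDerivAt
  simp [pd, h.fderiv]
  ring

lemma differentiableAt_div (hv : DifferentiableAt ℝ v x) (hw : DifferentiableAt ℝ w x)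
    (hx : w x ≠ 0) : DifferentiableAt ℝ (fun y => v y / w y) x := by
  simpa only [div_eq_mul_inv] using hv.fun_mul (hw.fun_inv hx)

lemma pd_div (hv : DifferentiableAt ℝ v x) (hw : DifferentiableAt ℝ w x) (hx : w x ≠ 0) :
    pd i (fun y => v y / w y) x = (pd i v x - v x / w x * pd i w x) / w x := by
  simp only [div_eq_mul_inv]
  rw [pd_mul (w := fun y => (w y)⁻¹) hv (hw.inv hx), pd_inv hw hx]
  field_simp
  ring

lemma pd_sum {ι : Type*} {s : Finset ι} {v : ι → (Fin n → ℝ) → ℝ}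
    (hv : ∀ j ∈ s, DifferentiableAt ℝ (v j) x) :
    pd i (fun y => ∑ j ∈ s, v j y) x = ∑ j ∈ s, pd i (v j) x := by
  simp [pd, fderiv_fun_sum hv]

end PartialDerivatives

section Regularity

variable {n : ℕ} {x : Fin n → ℝ} {v : (Fin n → ℝ) → ℝ}

lemma ContDiffAt.pd {m : ℕ} (hv : ContDiffAt ℝ (m + 1) v x) (i : Fin n) :
    ContDiffAt ℝ m (pd i v) x :=
  (hv.fderiv_right le_rfl).clm_apply contDiffAt_const

lemma ContDiffAt.hess_apply {m : ℕ} (hv : ContDiffAt ℝ (m + 2) v x) (i j : Fin n) :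
    ContDiffAt ℝ m (fun y => hess v y i j) x :=
  (ContDiffAt.pd (m := m + 1) hv j).pd i

lemma hess_apply_comm (hv : ContDiffAt ℝ 2 v x) (i j : Fin n) :
    hess v x i j = hess v x j i := by
  have hd : DifferentiableAt ℝ (fderiv ℝ v) x :=
    (hv.fderiv_right (m := 1) le_rfl).differentiableAt one_ne_zero
  have h : ∀ a b : Fin n,
      hess v x a b = fderiv ℝ (fderiv ℝ v) x (Pi.single a 1) (Pi.single b 1) := by
    intro a b
    simp [hess, pd, fderiv_clm_apply hd (differentiableAt_const _)]
  rw [h, h]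
  exact hv.isSymmSndFDerivAt (by simp) _ _

lemma transpose_hess (hv : ContDiffAt ℝ 2 v x) : (hess v x)ᵀ = hess v x := by
  ext i j
  exact hess_apply_comm hv j i

lemma pd_lap (hv : ContDiffAt ℝ 3 v x) (j : Fin n) :
    pd j (lap v) x = ∑ i, pd i (fun y => hess v y i j) x := by
  have hsymm : ∀ i, (fun y => hess v y j i) =ᶠ[𝓝 x] fun y => hess v y i j := fun i =>
    (hv.eventually (by simp)).mono fun y hy => hess_apply_comm (hy.of_le (by norm_num)) j i
  refine (pd_sum fun i _ => ((hv.hess_apply (m := 1) i i).differentiableAt one_ne_zero)).trans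
    (Finset.sum_congr rfl fun i _ => ?_)
  calc pd j (fun y => hess v y i i) x = hess (pd i v) x j i := rfl
    _ = hess (pd i v) x i j := hess_apply_comm (ContDiffAt.pd (m := 2) hv i) j i
    _ = pd i (fun y => hess v y j i) x := rfl
    _ = pd i (fun y => hess v y i j) x := pd_congr (hsymm i)

end Regularity

section VectorCalculus

variable {n : ℕ} {x : Fin n → ℝ}

noncomputable def gradVec (V : (Fin n → ℝ) → Fin n → ℝ) (x : Fin n → ℝ) :
    Matrix (Fin n) (Fin n) ℝ :=
  fun i j => pd i (fun y => V y j) x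

noncomputable def divgMat (A : (Fin n → ℝ) → Matrix (Fin n) (Fin n) ℝ) (x : Fin n → ℝ) :
    Fin n → ℝ :=
  fun j => ∑ i, pd i (fun y => A y i j) x

lemma divg_congr {X Y : (Fin n → ℝ) → Fin n → ℝ} (h : X =ᶠ[𝓝 x] Y) : divg X x = divg Y x :=
  Finset.sum_congr rfl fun _ _ => pd_congr (h.mono fun _ hy => congrFun hy _)

lemma divgMat_add_const (A : (Fin n → ℝ) → Matrix (Fin n) (Fin n) ℝ)
    (C : Matrix (Fin n) (Fin n) ℝ) : divgMat (fun y => A y + C) x = divgMat A x := by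
  ext j
  simp only [divgMat, Matrix.add_apply, pd_add_const]

lemma divg_smul_mulVec {φ : (Fin n → ℝ) → ℝ} {A : (Fin n → ℝ) → Matrix (Fin n) (Fin n) ℝ}
    {V : (Fin n → ℝ) → Fin n → ℝ} (hφ : DifferentiableAt ℝ φ x)
    (hA : ∀ i j, DifferentiableAt ℝ (fun y => A y i j) x)
    (hV : ∀ j, DifferentiableAt ℝ (fun y => V y j) x) :
    divg (fun y => φ y • (A y *ᵥ V y)) x =
      grad φ x ⬝ᵥ (A x *ᵥ V x) + φ x * (divgMat A x ⬝ᵥ V x + frobInner (A x) (gradVec V x)) := by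
  have hAV : ∀ i j, DifferentiableAt ℝ (fun y => A y i j * V y j) x :=
    fun i j => (hA i j).mul (hV j)
  have hcomp : ∀ i, pd i (fun y => (φ y • (A y *ᵥ V y)) i) x =
      pd i φ x * (A x *ᵥ V x) i + φ x * ∑ j, (pd i (fun y => A y i j) x * V x j
        + A x i j * pd i (fun y => V y j) x) := by
    intro i
    simp only [Pi.smul_apply, smul_eq_mul, mulVec, dotProduct]
    rw [pd_mul hφ (DifferentiableAt.fun_sum fun j _ => hAV i j), pd_sum fun j _ => hAV i j]
    simp only [pd_mul (hA _ _) (hV _)]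
  simp only [divg, hcomp, Finset.sum_add_distrib, mul_add, Finset.mul_sum]
  simp only [grad, divgMat, frobInner, gradVec, dotProduct, Finset.sum_mul, Finset.mul_sum]
  rw [Finset.sum_comm (γ := Fin n) (f := fun i j => φ x * (pd i (fun y => A y i j) x * V x j))]

end VectorCalculus

section Frobenius

variable {n : ℕ}

lemma frobInner_vecMulVec (A : Matrix (Fin n) (Fin n) ℝ) (a b : Fin n → ℝ) :
    frobInner A (vecMulVec a b) = a ⬝ᵥ (A *ᵥ b) := by
  simp only [frobInner, vecMulVec_apply, dotProduct, mulVec, Finset.mul_sum]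
  exact Finset.sum_congr rfl fun i _ => Finset.sum_congr rfl fun j _ => by ring

lemma frobInner_sub_right (A B C : Matrix (Fin n) (Fin n) ℝ) :
    frobInner A (B - C) = frobInner A B - frobInner A C := by
  simp only [frobInner, Matrix.sub_apply, mul_sub, Finset.sum_sub_distrib]

lemma frobInner_smul_right (A B : Matrix (Fin n) (Fin n) ℝ) (c : ℝ) :
    frobInner A (c • B) = c * frobInner A B := by
  simp only [frobInner, Matrix.smul_apply, smul_eq_mul, Finset.mul_sum]
  exact Finset.sum_congr rfl fun i _ => Finset.sum_congr rfl fun j _ => by ring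

lemma frobInner_one_right (A : Matrix (Fin n) (Fin n) ℝ) : frobInner A 1 = trace A := by
  simp [frobInner, Matrix.one_apply, trace]

noncomputable def tracelessPart (A : Matrix (Fin n) (Fin n) ℝ) : Matrix (Fin n) (Fin n) ℝ :=
  A - (trace A / n) • 1

lemma frobInner_tracelessPart (A : Matrix (Fin n) (Fin n) ℝ) :
    frobInner (tracelessPart A) A = frobSq (tracelessPart A) := by
  set c := trace A / n
  set B := tracelessPart A
  have hc : c * trace B = 0 := by
    rcases eq_or_ne (n : ℝ) 0 with hn | hn
    · simp [c, hn] -- `trace A / 0 = 0`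
    · simp [B, c, tracelessPart, trace_sub, field]
  have hAB : A - B = c • 1 := sub_sub_cancel _ _
  calc frobInner B A = frobInner B B + frobInner B (A - B) := by
        rw [frobInner_sub_right B A B]; ring
    _ = frobSq B := by
        rw [hAB, frobInner_smul_right, frobInner_one_right, hc, add_zero]
        simp only [frobInner, frobSq, sq]

end Frobenius

section TorsionField

variable {n : ℕ} {f u : (Fin n → ℝ) → ℝ} {x : Fin n → ℝ}

noncomputable def relGrad (f u : (Fin n → ℝ) → ℝ) (y : Fin n → ℝ) : Fin n → ℝ :=
  grad u y - (u y / f y) • grad f y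

noncomputable def relHess (f u : (Fin n → ℝ) → ℝ) (y : Fin n → ℝ) : Matrix (Fin n) (Fin n) ℝ :=
  hess u y - (u y / f y) • hess f y

noncomputable def torsionField (f u : (Fin n → ℝ) → ℝ) (y : Fin n → ℝ) : Fin n → ℝ :=
  f y • grad (fun z => dotp (grad u z) (grad u z)) y
  + (2 / (n : ℝ)) • (f y • grad u y)
  - (hess f y).mulVec (grad (fun z => (u z) ^ 2) y)
  - (2 / (n : ℝ)) • (u y • grad f y)
  - (2 * u y) • ((hess u y).mulVec (grad f y))
  + (2 * (u y) ^ 2 / f y) • ((hess f y).mulVec (grad f y))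

lemma grad_dotp_grad_self (hu : ContDiffAt ℝ 2 u x) :
    grad (fun z => dotp (grad u z) (grad u z)) x = (2 : ℝ) • (hess u x *ᵥ grad u x) := by
  have hd : ∀ j, DifferentiableAt ℝ (pd j u) x := fun j =>
    (ContDiffAt.pd (m := 1) hu j).differentiableAt one_ne_zero
  ext i
  simp only [grad, dotp, Pi.smul_apply, smul_eq_mul, mulVec, dotProduct, Finset.mul_sum]
  rw [pd_sum (v := fun j y => pd j u y * pd j u y) fun j _ => (hd j).mul (hd j)]
  exact Finset.sum_congr rfl fun j _ => by rw [pd_mul (hd j) (hd j)]; simp only [hess]; ring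

lemma grad_sq (hu : DifferentiableAt ℝ u x) :
    grad (fun z => u z ^ 2) x = (2 * u x) • grad u x := by
  ext i
  simp only [sq, grad, pd_mul hu hu, Pi.smul_apply, smul_eq_mul]
  ring

lemma torsionField_eq (hu : ContDiffAt ℝ 2 u x) (hfx : f x ≠ 0) :
    torsionField f u x = (2 * f x) • ((relHess f u x + (n : ℝ)⁻¹ • 1) *ᵥ relGrad f u x) := by
  rw [torsionField, grad_dotp_grad_self hu, grad_sq (hu.differentiableAt two_ne_zero), relHess,
    relGrad]
  set w := u x / f x
  have hw : u x = f x * w := (mul_div_cancel₀ _ hfx).symm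
  have h2 : 2 * (f x * w) ^ 2 / f x = 2 * f x * w ^ 2 := by field_simp
  simp only [add_mulVec, sub_mulVec, mulVec_sub, mulVec_smul, smul_mulVec, one_mulVec, hw, h2]
  module

lemma grad_div (hf : DifferentiableAt ℝ f x) (hu : DifferentiableAt ℝ u x) (hfx : f x ≠ 0) :
    grad (fun y => u y / f y) x = (f x)⁻¹ • relGrad f u x := by
  ext i
  simp only [grad, pd_div hu hf hfx, relGrad, Pi.smul_apply, Pi.sub_apply, smul_eq_mul]
  ring

lemma gradVec_relGrad (hf : ContDiffAt ℝ 2 f x) (hu : ContDiffAt ℝ 2 u x) (hfx : f x ≠ 0) :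
    gradVec (relGrad f u) x = relHess f u x - (f x)⁻¹ • vecMulVec (relGrad f u x) (grad f x) := by
  have hf1 := hf.differentiableAt two_ne_zero
  have hu1 := hu.differentiableAt two_ne_zero
  have hw := differentiableAt_div hu1 hf1 hfx
  have hgf : ∀ j, DifferentiableAt ℝ (pd j f) x := fun j =>
    (ContDiffAt.pd (m := 1) hf j).differentiableAt one_ne_zero
  have hgu : ∀ j, DifferentiableAt ℝ (pd j u) x := fun j =>
    (ContDiffAt.pd (m := 1) hu j).differentiableAt one_ne_zero
  have hdw : ∀ i, pd i (fun y => u y / f y) x = (f x)⁻¹ * relGrad f u x i :=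
    congrFun (grad_div hf1 hu1 hfx)
  ext i j
  simp only [gradVec, relGrad, Pi.sub_apply, Pi.smul_apply, smul_eq_mul, grad]
  rw [pd_sub (hgu j) (hw.fun_mul (hgf j)), pd_mul (v := fun y => u y / f y) hw (hgf j), hdw]
  simp only [relHess, relGrad, Matrix.sub_apply, Matrix.smul_apply, vecMulVec_apply, smul_eq_mul,
    hess, grad, Pi.sub_apply, Pi.smul_apply]
  ring

lemma divgMat_relHess (hf : ContDiffAt ℝ 3 f x) (hu : ContDiffAt ℝ 3 u x) (hfx : f x ≠ 0)
    (heq : ∀ᶠ y in 𝓝 x, lap u y = -1 + lap f y / f y * u y) :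
    divgMat (relHess f u) x = (f x)⁻¹ • (relGrad f u x ᵥ* (lap f x • 1 - hess f x)) := by
  have hf1 := hf.differentiableAt (by norm_num)
  have hu1 := hu.differentiableAt (by norm_num)
  have hw := differentiableAt_div hu1 hf1 hfx
  have hHf : ∀ i j, DifferentiableAt ℝ (fun y => hess f y i j) x := fun i j =>
    (hf.hess_apply (m := 1) i j).differentiableAt one_ne_zero
  have hHu : ∀ i j, DifferentiableAt ℝ (fun y => hess u y i j) x := fun i j =>
    (hu.hess_apply (m := 1) i j).differentiableAt one_ne_zero
  have hdw : ∀ i, pd i (fun y => u y / f y) x = (f x)⁻¹ * relGrad f u x i :=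
    congrFun (grad_div hf1 hu1 hfx)
  have hlapu : ∀ j, pd j (lap u) x =
      pd j (lap f) x * (u x / f x) + lap f x * pd j (fun y => u y / f y) x := by
    intro j
    have hlapf : DifferentiableAt ℝ (lap f) x := DifferentiableAt.fun_sum fun i _ => hHf i i
    rw [pd_congr (w := fun y => -1 + lap f y * (u y / f y)) (heq.mono fun y hy => by rw [hy]; ring),
      pd_const_add, pd_mul hlapf hw]
  have hterm : ∀ i j, pd i (fun y => relHess f u y i j) x = pd i (fun y => hess u y i j) x
      - (pd i (fun y => u y / f y) x * hess f x i j
        + u x / f x * pd i (fun y => hess f y i j) x) := by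
    intro i j
    simp only [relHess, Matrix.sub_apply, Matrix.smul_apply, smul_eq_mul]
    rw [pd_sub (hHu i j) (hw.fun_mul (hHf i j)), pd_mul (v := fun y => u y / f y) hw (hHf i j)]
  ext j
  simp only [divgMat, hterm, Finset.sum_sub_distrib, Finset.sum_add_distrib, ← Finset.mul_sum,
    ← pd_lap hu j, ← pd_lap hf j, hlapu j, hdw]
  simp only [vecMul, dotProduct, Pi.smul_apply, smul_eq_mul, Matrix.sub_apply, Matrix.smul_apply,
    Matrix.one_apply, mul_sub, mul_ite, mul_one, mul_zero, Finset.sum_sub_distrib,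
    Finset.sum_ite_eq', Finset.mem_univ, if_true, Finset.mul_sum, mul_assoc]
  ring

lemma tracelessPart_relHess :
    tracelessPart (relHess f u x) = hess u x - (lap u x / (n : ℝ)) • (1 : Matrix (Fin n) (Fin n) ℝ)
      - (u x / f x) • (hess f x - (lap f x / (n : ℝ)) • (1 : Matrix (Fin n) (Fin n) ℝ)) := by
  have htr : trace (relHess f u x) = lap u x - u x / f x * lap f x := by
    rw [relHess, trace_sub, trace_smul]
    rfl
  rw [tracelessPart, htr, relHess]
  module

lemma divg_torsionField (hf : ContDiffAt ℝ 3 f x) (hu : ContDiffAt ℝ 3 u x)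
    (hf0 : ∀ᶠ y in 𝓝 x, f y ≠ 0) (heq : ∀ᶠ y in 𝓝 x, lap u y = -1 + lap f y / f y * u y) :
    divg (torsionField f u) x = 2 * f x * frobSq (tracelessPart (relHess f u x))
      + 2 * relGrad f u x ⬝ᵥ ((lap f x • 1 - hess f x) *ᵥ relGrad f u x) := by
  set T : (Fin n → ℝ) → Matrix (Fin n) (Fin n) ℝ := fun y => relHess f u y + (n : ℝ)⁻¹ • 1
  have hfx : f x ≠ 0 := hf0.self_of_nhds
  have hf1 := hf.differentiableAt (by norm_num)
  have hu1 := hu.differentiableAt (by norm_num)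
  have hw := differentiableAt_div hu1 hf1 hfx
  have hX : torsionField f u =ᶠ[𝓝 x] fun y => (2 * f y) • (T y *ᵥ relGrad f u y) := by
    filter_upwards [hu.eventually (by simp), hf0] with y hy hfy
    exact torsionField_eq (hy.of_le (by norm_num)) hfy
  have hTd : ∀ i j, DifferentiableAt ℝ (fun y => T y i j) x := fun i j =>
    (((hu.hess_apply (m := 1) i j).differentiableAt one_ne_zero).sub
      (hw.fun_mul ((hf.hess_apply (m := 1) i j).differentiableAt one_ne_zero))).add_const _
  have hVd : ∀ j, DifferentiableAt ℝ (fun y => relGrad f u y j) x := fun j =>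
    ((ContDiffAt.pd (m := 2) hu j).differentiableAt two_ne_zero).sub
      (hw.fun_mul ((ContDiffAt.pd (m := 2) hf j).differentiableAt two_ne_zero))
  have htrace : trace (relHess f u x) = -1 := by
    rw [relHess, trace_sub, trace_smul]
    change lap u x - u x / f x * lap f x = -1
    rw [heq.self_of_nhds]
    ring
  have hTx : T x = tracelessPart (relHess f u x) := by
    simp only [T, tracelessPart, htrace]
    module
  have hsymm : (T x)ᵀ = T x := by
    simp only [T, relHess, transpose_add, transpose_sub, transpose_smul, transpose_one,
      transpose_hess (hu.of_le (by norm_num)), transpose_hess (hf.of_le (by norm_num))]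
  have hTM : frobInner (T x) (relHess f u x) = frobSq (T x) := by
    rw [hTx]
    exact frobInner_tracelessPart _
  have hTV : relGrad f u x ⬝ᵥ (T x *ᵥ grad f x) = grad f x ⬝ᵥ (T x *ᵥ relGrad f u x) := by
    rw [dotProduct_mulVec, ← mulVec_transpose, hsymm, dotProduct_comm]
  have h2f : grad (fun y => 2 * f y) x = (2 : ℝ) • grad f x := by
    ext i
    simp only [grad, pd_const_mul hf1, Pi.smul_apply, smul_eq_mul]
  rw [divg_congr hX, divg_smul_mulVec (hf1.const_mul 2) hTd hVd, divgMat_add_const,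
    divgMat_relHess hf hu hfx heq, gradVec_relGrad (hf.of_le (by norm_num))
    (hu.of_le (by norm_num)) hfx, frobInner_sub_right, frobInner_smul_right, frobInner_vecMulVec,
    hTM, hTV, h2f, smul_dotProduct, smul_dotProduct, ← dotProduct_mulVec, ← hTx]
  linear_combination (2 * (relGrad f u x ⬝ᵥ ((lap f x • 1 - hess f x) *ᵥ relGrad f u x))
    - 2 * (grad f x ⬝ᵥ (T x *ᵥ relGrad f u x))) * mul_inv_cancel₀ hfx

end TorsionField

theorem stmt0_general {n : ℕ} {U : Set (Fin n → ℝ)} (hU : IsOpen U)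
    (f u : (Fin n → ℝ) → ℝ)
    (hf : ContDiffOn ℝ 3 f U) (hfpos : ∀ x ∈ U, 0 < f x)
    (hu : ContDiffOn ℝ 3 u U)
    (heq : ∀ x ∈ U, lap u x = -1 + (lap f x / f x) * u x)
    (X : (Fin n → ℝ) → (Fin n → ℝ))
    (hX : ∀ y, X y =
      f y • grad (fun z => dotp (grad u z) (grad u z)) y
      + (2 / (n : ℝ)) • (f y • grad u y)
      - (hess f y).mulVec (grad (fun z => (u z) ^ 2) y)
      - (2 / (n : ℝ)) • (u y • grad f y)
      - (2 * u y) • ((hess u y).mulVec (grad f y))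
      + (2 * (u y) ^ 2 / f y) • ((hess f y).mulVec (grad f y))) :
    ∀ x ∈ U,
      divg X x =
        2 * f x *
          frobSq (hess u x - (lap u x / (n : ℝ)) • (1 : Matrix (Fin n) (Fin n) ℝ)
            - (u x / f x) • (hess f x - (lap f x / (n : ℝ)) • (1 : Matrix (Fin n) (Fin n) ℝ)))
        + 2 * dotp (grad u x - (u x / f x) • grad f x)
            ((lap f x • (1 : Matrix (Fin n) (Fin n) ℝ) - hess f x).mulVec
              (grad u x - (u x / f x) • grad f x)) := by
  intro x hx
  have hxU : U ∈ 𝓝 x := hU.mem_nhds hx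
  rw [show X = torsionField f u from funext hX,
    divg_torsionField (hf.contDiffAt hxU) (hu.contDiffAt hxU)
      (Filter.mem_of_superset hxU fun y hy => (hfpos y hy).ne') (Filter.mem_of_superset hxU heq),
    ← tracelessPart_relHess]
  rfl

theorem stmt0 {n : ℕ} (hn : 2 ≤ n) {U : Set (Fin n → ℝ)} (hU : IsOpen U)
    (f u : (Fin n → ℝ) → ℝ)
    (hf : ContDiffOn ℝ 3 f U) (hfpos : ∀ x ∈ U, 0 < f x)
    (hu : ContDiffOn ℝ 3 u U)
    (heq : ∀ x ∈ U, lap u x = -1 + (lap f x / f x) * u x)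
    (X : (Fin n → ℝ) → (Fin n → ℝ))
    (hX : ∀ y, X y =
      f y • grad (fun z => dotp (grad u z) (grad u z)) y
      + (2 / (n : ℝ)) • (f y • grad u y)
      - (hess f y).mulVec (grad (fun z => (u z) ^ 2) y)
      - (2 / (n : ℝ)) • (u y • grad f y)
      - (2 * u y) • ((hess u y).mulVec (grad f y))
      + (2 * (u y) ^ 2 / f y) • ((hess f y).mulVec (grad f y))) :
    ∀ x ∈ U,
      divg X x =
        2 * f x *
          frobSq (hess u x - (lap u x / (n : ℝ)) • (1 : Matrix (Fin n) (Fin n) ℝ)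
            - (u x / f x) • (hess f x - (lap f x / (n : ℝ)) • (1 : Matrix (Fin n) (Fin n) ℝ)))
        + 2 * dotp (grad u x - (u x / f x) • grad f x)
            ((lap f x • (1 : Matrix (Fin n) (Fin n) ℝ) - hess f x).mulVec
              (grad u x - (u x / f x) • grad f x)) :=
  stmt0_general hU f u hf hfpos hu heq X hX
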